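/- Let D be a division ring, M = (m_1,…,m_r), N = (n_1,…,n_s) partitions of m and n, and J a nonzero subbimodule of T_{(M,N)}(D), i.e., an additive subgroup with T_M·J ⊆ J and J·T_N ⊆ J. Then there exist a unique integer 1 ≤ i ≤ min(r,s) and a unique nondecreasing sequence (j_1,…,j_i) with k ≤ j_k ≤ s for each 1 ≤ k ≤ i, such that J = {A ∈ M_{m×n}(D) : A_{kl} = 0 whenever k > i, and A_{kl} = 0 whenever k ≤ i and l < j_k}. Moreover, every subbimodule of T_{(M,N)}(D) is principal: there exists A ∈ J such that J is the smallest subbimodule of T_{(M,N)}(D) containing A. -/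

import Mathlib

/-!
Sandwiching a matrix of `J` between matrix units of the two nest algebras moves a nonzero entry
in block `(k, l)` to an arbitrary position of any block `(k', l')` with `k' ≤ k` and `l ≤ l'`.
Hence `J` is exactly the set of nest matrices vanishing off its block support, and that support
is a staircase: the rows `k < i`, row `k` starting at column `j_k`, with `j` nondecreasing and
`k ≤ j_k` because `J` lies in the nest module. Since all blocks are nonempty, the zero pattern
determines the staircase, which gives uniqueness; and the `0`-`1` matrix with ones on the block
support generates `J`, since any subbimodule containing it has at least the same block support.
-/

open Matrix Pointwise

/-- The left row space of a matrix: the span of its rows in the left `D`-module of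
row vectors `Fin n → D`. -/
def LRS {D : Type*} [DivisionRing D] {ι : Type*} {n : ℕ} (A : Matrix ι (Fin n) D) :
    Submodule D (Fin n → D) :=
  Submodule.span D (Set.range A)

/-- The right column space of a matrix: the span of its columns in the right `D`-module
(i.e. `Dᵐᵒᵖ`-module) of column vectors `Fin m → D`. -/
def RCS {D : Type*} [DivisionRing D] {ι : Type*} {m : ℕ} (A : Matrix (Fin m) ι D) :
    Submodule Dᵐᵒᵖ (Fin m → D) :=
  Submodule.span Dᵐᵒᵖ (Set.range Aᵀ)

/-- `R` is a left row reduced echelon matrix: for some `t ≤ m`, the rows with (0-based)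
index `≥ t` are zero, each of the first `t` rows has first nonzero entry `1`, located in
column `k i`, the `k i` are strictly increasing, and column `k i` is zero outside row `i`. -/
def IsRowReducedEchelon {D : Type*} [DivisionRing D] {m n : ℕ}
    (R : Matrix (Fin m) (Fin n) D) : Prop :=
  ∃ (t : ℕ) (ht : t ≤ m) (k : Fin t → Fin n),
    StrictMono k ∧
    (∀ i : Fin m, t ≤ (i : ℕ) → R i = 0) ∧
    (∀ i : Fin t, R (Fin.castLE ht i) (k i) = 1) ∧
    (∀ (i : Fin t) (j : Fin n), (j : ℕ) < (k i : ℕ) → R (Fin.castLE ht i) j = 0) ∧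
    (∀ (i : Fin t) (p : Fin m), (p : ℕ) ≠ (i : ℕ) → R p (k i) = 0)

/-- `C` is a right column reduced echelon matrix: its transpose is left row reduced
echelon (columns of `C` beyond the first `t` are zero, each of the first `t` columns has
first-from-the-top nonzero entry `1` located in row `k j`, the `k j` strictly increase,
and row `k j` is zero outside column `j`). -/
def IsColReducedEchelon {D : Type*} [DivisionRing D] {m n : ℕ}
    (C : Matrix (Fin m) (Fin n) D) : Prop :=
  IsRowReducedEchelon Cᵀ

/-- `A` is upper triangular: the `(i,j)` entry vanishes whenever `i > j`. -/
def IsUpperTriangular {D : Type*} [Zero D] {m n : ℕ} (A : Matrix (Fin m) (Fin n) D) : Prop :=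
  ∀ (i : Fin m) (j : Fin n), (j : ℕ) < (i : ℕ) → A i j = 0

/-- The index at which block `i` of the partition `M` starts. -/
def blockStart {r : ℕ} (M : Fin r → ℕ) (i : Fin r) : ℕ :=
  ∑ t ∈ Finset.Iio i, M t

theorem blockStart_add_lt {r : ℕ} (M : Fin r → ℕ) (i : Fin r) (a : Fin (M i)) :
    blockStart M i + (a : ℕ) < ∑ t, M t := by
  have h2 : (a : ℕ) < M i := a.2
  have h1 : blockStart M i + M i ≤ ∑ t, M t := by
    have hins : i ∉ Finset.Iio i := by simp
    calc blockStart M i + M i = ∑ t ∈ insert i (Finset.Iio i), M t := by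
          rw [Finset.sum_insert hins, blockStart, add_comm]
      _ ≤ ∑ t, M t := Finset.sum_le_sum_of_subset (Finset.subset_univ _)
  omega

/-- The global (row or column) index of the `a`-th entry of the `i`-th block of the
partition `M`. -/
def blockIdx {r : ℕ} (M : Fin r → ℕ) (i : Fin r) (a : Fin (M i)) : Fin (∑ t, M t) :=
  ⟨blockStart M i + (a : ℕ), blockStart_add_lt M i a⟩

/-- Membership in the nest module `T_{(M,N)}(D)`: the `(i,j)` block vanishes whenever
`i > j`. -/
def IsNest {D : Type*} [Zero D] {r s : ℕ} (M : Fin r → ℕ) (N : Fin s → ℕ)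
    (A : Matrix (Fin (∑ t, M t)) (Fin (∑ t, N t)) D) : Prop :=
  ∀ (i : Fin r) (j : Fin s) (a : Fin (M i)) (b : Fin (N j)),
    (j : ℕ) < (i : ℕ) → A (blockIdx M i a) (blockIdx N j b) = 0

/-- The `i`-th block row of a matrix whose rows are partitioned according to `M`. -/
def blockRow {D : Type*} {r n : ℕ} (M : Fin r → ℕ)
    (A : Matrix (Fin (∑ t, M t)) (Fin n) D) (i : Fin r) :
    Matrix (Fin (M i)) (Fin n) D :=
  fun a q => A (blockIdx M i a) q

/-- The `j`-th block column of a matrix whose columns are partitioned according to `N`. -/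
def blockCol {D : Type*} {s m : ℕ} (N : Fin s → ℕ)
    (A : Matrix (Fin m) (Fin (∑ t, N t)) D) (j : Fin s) :
    Matrix (Fin m) (Fin (N j)) D :=
  fun p b => A p (blockIdx N j b)

section Blocks

variable {r : ℕ} (M : Fin r → ℕ)

lemma blockIdx_eq_finSigmaFinEquiv (k : Fin r) (a : Fin (M k)) :
    blockIdx M k a = finSigmaFinEquiv ⟨k, a⟩ := by
  have hIio : (Finset.univ : Finset (Fin k)).map (Fin.castLEEmb k.2.le) = Finset.Iio k := by
    ext t
    simp only [Finset.mem_map, Finset.mem_univ, true_and, Fin.castLEEmb_apply, Finset.mem_Iio]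
    exact ⟨by rintro ⟨a, rfl⟩; exact a.2, fun h => ⟨⟨t, h⟩, rfl⟩⟩
  ext
  rw [finSigmaFinEquiv_apply, blockIdx, Fin.val_mk, blockStart, ← hIio, Finset.sum_map]
  rfl

lemma exists_blockIdx_eq (p : Fin (∑ t, M t)) : ∃ k a, blockIdx M k a = p := by
  obtain ⟨⟨k, a⟩, rfl⟩ := finSigmaFinEquiv.surjective p
  exact ⟨k, a, blockIdx_eq_finSigmaFinEquiv M k a⟩

def blockOf (p : Fin (∑ t, M t)) : Fin r :=
  (finSigmaFinEquiv.symm p).1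

@[simp]
lemma blockOf_blockIdx (k : Fin r) (a : Fin (M k)) : blockOf M (blockIdx M k a) = k := by
  rw [blockOf, blockIdx_eq_finSigmaFinEquiv, Equiv.symm_apply_apply]

variable {M} in
lemma eq_of_blockIdx_eq {k k' : Fin r} {a : Fin (M k)} {a' : Fin (M k')}
    (h : blockIdx M k a = blockIdx M k' a') : k = k' := by
  simpa using congrArg (blockOf M) h

end Blocks

section BlockMatrices

variable {D : Type*} {r s : ℕ} (M : Fin r → ℕ) (N : Fin s → ℕ)

lemma isNest_single [Zero D] {k : Fin r} {l : Fin s} (h : (k : ℕ) ≤ l) (a : Fin (M k))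
    (b : Fin (N l)) (c : D) : IsNest M N (Matrix.single (blockIdx M k a) (blockIdx N l b) c) := by
  intro k' l' a' b' hlt
  apply Matrix.single_apply_of_ne
  rintro ⟨hk, hl⟩
  rw [eq_of_blockIdx_eq hk, eq_of_blockIdx_eq hl] at h
  omega

def blockZeroLocus [Zero D] (P : Fin r → Fin s → Prop) :
    Set (Matrix (Fin (∑ t, M t)) (Fin (∑ t, N t)) D) :=
  {A | ∀ k l a b, P k l → A (blockIdx M k a) (blockIdx N l b) = 0}

def blockSupport [AddGroup D] (J : AddSubgroup (Matrix (Fin (∑ t, M t)) (Fin (∑ t, N t)) D))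
    (k : Fin r) (l : Fin s) : Prop :=
  ∃ A ∈ J, ∃ a b, A (blockIdx M k a) (blockIdx N l b) ≠ 0

lemma coe_subset_blockZeroLocus_blockSupport [AddGroup D]
    (J : AddSubgroup (Matrix (Fin (∑ t, M t)) (Fin (∑ t, N t)) D)) :
    (J : Set (Matrix _ _ D)) ⊆ blockZeroLocus M N (fun k l => ¬ blockSupport M N J k l) :=
  fun A hA _ _ a b hkl => by_contra fun h => hkl ⟨A, hA, a, b, h⟩

lemma exists_blockSupport_of_ne_bot [AddGroup D]
    {J : AddSubgroup (Matrix (Fin (∑ t, M t)) (Fin (∑ t, N t)) D)} (hne : J ≠ ⊥) :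
    ∃ k l, blockSupport M N J k l := by
  by_contra! h
  refine hne ((AddSubgroup.eq_bot_iff_forall J).2 fun A hA => Matrix.ext fun p q => ?_)
  obtain ⟨k, a, rfl⟩ := exists_blockIdx_eq M p
  obtain ⟨l, b, rfl⟩ := exists_blockIdx_eq N q
  exact not_not.mp fun hd => h k l ⟨A, hA, a, b, hd⟩

variable {M N} in
lemma single_mem_blockZeroLocus_iff [Zero D] {P : Fin r → Fin s → Prop} {k : Fin r} {l : Fin s}
    (a : Fin (M k)) (b : Fin (N l)) {c : D} (hc : c ≠ 0) :
    Matrix.single (blockIdx M k a) (blockIdx N l b) c ∈ blockZeroLocus M N P ↔ ¬ P k l := by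
  refine ⟨fun h hP => hc (by simpa using h k l a b hP), fun hP k' l' a' b' hP' => ?_⟩
  apply Matrix.single_apply_of_ne
  rintro ⟨hk, hl⟩
  apply hP
  rwa [eq_of_blockIdx_eq hk, eq_of_blockIdx_eq hl]

lemma blockZeroLocus_injective [Zero D] [Nontrivial D] (hM : ∀ k, 0 < M k)
    (hN : ∀ l, 0 < N l) : Function.Injective (blockZeroLocus (D := D) M N) := by
  intro P Q h
  obtain ⟨c, hc⟩ := exists_ne (0 : D)
  ext k l
  rw [← not_iff_not, ← single_mem_blockZeroLocus_iff ⟨0, hM k⟩ ⟨0, hN l⟩ hc, h,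
    single_mem_blockZeroLocus_iff ⟨0, hM k⟩ ⟨0, hN l⟩ hc]

structure IsNestSubbimodule [Ring D]
    (J : AddSubgroup (Matrix (Fin (∑ t, M t)) (Fin (∑ t, N t)) D)) : Prop where
  isNest : ∀ A ∈ J, IsNest M N A
  mul_mem_left : ∀ (P : Matrix (Fin (∑ t, M t)) (Fin (∑ t, M t)) D)
    (A : Matrix (Fin (∑ t, M t)) (Fin (∑ t, N t)) D), IsNest M M P → A ∈ J → P * A ∈ J
  mul_mem_right : ∀ (A : Matrix (Fin (∑ t, M t)) (Fin (∑ t, N t)) D)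
    (Q : Matrix (Fin (∑ t, N t)) (Fin (∑ t, N t)) D), IsNest N N Q → A ∈ J → A * Q ∈ J

end BlockMatrices

namespace IsNestSubbimodule

variable {D : Type*} [DivisionRing D] {r s : ℕ} {M : Fin r → ℕ} {N : Fin s → ℕ}
  {J : AddSubgroup (Matrix (Fin (∑ t, M t)) (Fin (∑ t, N t)) D)} (hJ : IsNestSubbimodule M N J)
include hJ

theorem single_mem {k k' : Fin r} {l l' : Fin s} (hkl : blockSupport M N J k l) (hk : k' ≤ k)
    (hl : l ≤ l') (a' : Fin (M k')) (b' : Fin (N l')) (c : D) :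
    Matrix.single (blockIdx M k' a') (blockIdx N l' b') c ∈ J := by
  obtain ⟨A, hA, a, b, hd⟩ := hkl
  set d := A (blockIdx M k a) (blockIdx N l b)
  have hmem := hJ.mul_mem_right _ _ (isNest_single N N hl b b' (d⁻¹ * c))
    (hJ.mul_mem_left _ _ (isNest_single M M hk a' a (1 : D)) hA)
  rwa [Matrix.single_mul_mul_single, one_mul, mul_inv_cancel_left₀ hd] at hmem

theorem blockSupport_of_le {k k' : Fin r} {l l' : Fin s} (hkl : blockSupport M N J k l)
    (hk : k' ≤ k) (hl : l ≤ l') (a' : Fin (M k')) (b' : Fin (N l')) : blockSupport M N J k' l' :=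
  ⟨_, hJ.single_mem hkl hk hl a' b' 1, a', b', by simp⟩

theorem blockSupport_le {k : Fin r} {l : Fin s} (hkl : blockSupport M N J k l) :
    (k : ℕ) ≤ l := by
  obtain ⟨A, hA, a, b, hd⟩ := hkl
  by_contra h
  exact hd (hJ.isNest A hA k l a b (not_le.mp h))

theorem coe_eq_blockZeroLocus :
    (J : Set (Matrix _ _ D)) = blockZeroLocus M N (fun k l => ¬ blockSupport M N J k l) := by
  refine (coe_subset_blockZeroLocus_blockSupport M N J).antisymm fun A hA => ?_
  rw [SetLike.mem_coe, Matrix.matrix_eq_sum_single A]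
  refine AddSubgroup.sum_mem _ fun p _ => AddSubgroup.sum_mem _ fun q _ => ?_
  obtain ⟨k, a, rfl⟩ := exists_blockIdx_eq M p
  obtain ⟨l, b, rfl⟩ := exists_blockIdx_eq N q
  by_cases hkl : blockSupport M N J k l
  · exact hJ.single_mem hkl le_rfl le_rfl a b _
  · rw [hA k l a b hkl, Matrix.single_zero]
    exact J.zero_mem

theorem coe_eq_blockZeroLocus_iff (hM : ∀ k, 0 < M k) (hN : ∀ l, 0 < N l)
    {P : Fin r → Fin s → Prop} :
    (J : Set (Matrix _ _ D)) = blockZeroLocus M N P ↔ ∀ k l, blockSupport M N J k l ↔ ¬ P k l := by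
  rw [hJ.coe_eq_blockZeroLocus, (blockZeroLocus_injective M N hM hN).eq_iff, eq_comm]
  simp only [funext_iff, eq_iff_iff, iff_not_comm]

theorem le_of_blockSupport_imp {K : AddSubgroup (Matrix (Fin (∑ t, M t)) (Fin (∑ t, N t)) D)}
    (hK : IsNestSubbimodule M N K)
    (h : ∀ k l, blockSupport M N J k l → blockSupport M N K k l) : J ≤ K := by
  intro A hA
  have hA' := hJ.coe_eq_blockZeroLocus.subset hA
  rw [← SetLike.mem_coe, hK.coe_eq_blockZeroLocus]
  exact fun k l a b hkl => hA' k l a b (mt (h k l) hkl)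

theorem exists_generator :
    ∃ A ∈ J, ∀ K : AddSubgroup (Matrix (Fin (∑ t, M t)) (Fin (∑ t, N t)) D),
      IsNestSubbimodule M N K → A ∈ K → J ≤ K := by
  classical
  let G : Matrix (Fin (∑ t, M t)) (Fin (∑ t, N t)) D :=
    Matrix.of fun p q => if blockSupport M N J (blockOf M p) (blockOf N q) then 1 else 0
  have hG : ∀ k l a b,
      G (blockIdx M k a) (blockIdx N l b) = if blockSupport M N J k l then 1 else 0 :=
    fun k l a b => by simp [G]
  refine ⟨G, ?_, fun K hK hGK => hJ.le_of_blockSupport_imp hK fun k l hkl => ?_⟩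
  · rw [← SetLike.mem_coe, hJ.coe_eq_blockZeroLocus]
    intro k l a b hkl
    rw [hG, if_neg hkl]
  · obtain ⟨-, -, a, b, -⟩ := id hkl
    exact ⟨G, hGK, a, b, by simp [hG, hkl]⟩

end IsNestSubbimodule

section Staircase

variable {r s : ℕ}

def outsideStaircase (i : ℕ) (j : Fin i → Fin s) (k : Fin r) (l : Fin s) : Prop :=
  i ≤ (k : ℕ) ∨ ∃ hk : (k : ℕ) < i, (l : ℕ) < (j ⟨k, hk⟩ : ℕ)

lemma not_outsideStaircase_iff {i : ℕ} {j : Fin i → Fin s} {k : Fin r} {l : Fin s} :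
    ¬ outsideStaircase i j k l ↔ ∃ hk : (k : ℕ) < i, j ⟨k, hk⟩ ≤ l := by
  simp only [outsideStaircase, not_or, not_le, not_exists, not_lt]
  exact ⟨fun ⟨hk, hl⟩ => ⟨hk, hl hk⟩, fun ⟨hk, hl⟩ => ⟨hk, fun _ => hl⟩⟩

lemma le_of_outsideStaircase_imp {i i' : ℕ} {j : Fin i → Fin s} {j' : Fin i' → Fin s}
    (hi' : i' ≤ r) (h : ∀ (k : Fin r) l, outsideStaircase i j k l → outsideStaircase i' j' k l) :
    i' ≤ i := by
  by_contra! hlt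
  obtain h1 | ⟨_, h2⟩ := h ⟨i, by omega⟩ (j' ⟨i, hlt⟩) (Or.inl le_rfl)
  · exact absurd h1 (not_le.mpr hlt)
  · exact lt_irrefl _ h2

lemma eq_of_outsideStaircase_iff {i i' : ℕ} {j : Fin i → Fin s} {j' : Fin i' → Fin s}
    (hi : i ≤ r) (hi' : i' ≤ r)
    (h : ∀ (k : Fin r) l, outsideStaircase i j k l ↔ outsideStaircase i' j' k l) :
    (⟨i, j⟩ : (i : ℕ) × (Fin i → Fin s)) = ⟨i', j'⟩ := by
  obtain rfl := le_antisymm (le_of_outsideStaircase_imp hi fun k l => (h k l).2)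
    (le_of_outsideStaircase_imp hi' fun k l => (h k l).1)
  have hj : ∀ (k : Fin i) l, j k ≤ l ↔ j' k ≤ l := fun k l => by
    simpa [not_outsideStaircase_iff, k.2] using not_congr (h ⟨k, by omega⟩ l)
  obtain rfl : j = j' := funext fun k => le_antisymm ((hj k _).2 le_rfl) ((hj k _).1 le_rfl)
  rfl

lemma exists_staircase (S : Fin r → Fin s → Prop) (hne : ∃ k l, S k l)
    (hS : ∀ {k k' l l'}, S k l → k' ≤ k → l ≤ l' → S k' l')
    (hdiag : ∀ {k l}, S k l → (k : ℕ) ≤ l) :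
    ∃ (i : ℕ) (j : Fin i → Fin s), 1 ≤ i ∧ i ≤ min r s ∧ Monotone j ∧
      (∀ k : Fin i, (k : ℕ) ≤ j k) ∧ ∀ k l, S k l ↔ ¬ outsideStaircase i j k l := by
  obtain ⟨i, hrows⟩ : ∃ i, {n : ℕ | ∃ (hn : n < r) (l : Fin s), S ⟨n, hn⟩ l} = Set.Iio i := by
    refine (IsLowerSet.eq_univ_or_Iio fun n n' hle hn => ?_).resolve_left fun h => ?_
    · obtain ⟨hn, l, hl⟩ := hn
      exact ⟨by omega, l, hS hl hle le_rfl⟩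
    · obtain ⟨hr, -⟩ := h.symm ▸ Set.mem_univ r
      exact lt_irrefl r hr
  have hrow : ∀ k : Fin r, (∃ l, S k l) ↔ (k : ℕ) < i := fun k => by
    rw [← Set.mem_Iio, ← hrows]
    simp [k.2]
  obtain ⟨k₀, l₀, h₀⟩ := hne
  have hi : 1 ≤ i := by
    have := (hrow k₀).1 ⟨l₀, h₀⟩
    omega
  have hir : i ≤ r := by
    by_contra! h
    obtain ⟨hr, -⟩ : r ∈ {n : ℕ | ∃ (hn : n < r) (l : Fin s), S ⟨n, hn⟩ l} := hrows ▸ h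
    exact lt_irrefl r hr
  have hcol : ∀ k : Fin i, ∃ m, ∀ l, S (Fin.castLE hir k) l ↔ m ≤ l := by
    intro k
    obtain ⟨l, hl⟩ := (hrow (Fin.castLE hir k)).2 k.2
    obtain h | ⟨m, hm⟩ := IsUpperSet.eq_empty_or_Ici (s := {l | S (Fin.castLE hir k) l})
      fun l l' hle hl => hS hl le_rfl hle
    · exact (Set.eq_empty_iff_forall_notMem.1 h l hl).elim
    · exact ⟨m, fun l => Set.ext_iff.1 hm l⟩
  choose j hj using hcol
  have hjS : ∀ k, S (Fin.castLE hir k) (j k) := fun k => (hj k _).2 le_rfl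
  refine ⟨i, j, hi, le_min hir ?_, fun k k' hkk' => (hj k _).1 (hS (hjS k') hkk' le_rfl),
    fun k => hdiag (hjS k), fun k l => ?_⟩
  · obtain ⟨l, hl⟩ := (hrow ⟨i - 1, by omega⟩).2 (Nat.sub_one_lt_of_lt hi)
    have : i - 1 ≤ l := hdiag hl
    have := l.2
    omega
  · rw [not_outsideStaircase_iff]
    exact ⟨fun hkl => ⟨(hrow k).1 ⟨l, hkl⟩, (hj _ l).1 hkl⟩, fun ⟨hk, hjl⟩ => (hj ⟨k, hk⟩ l).2 hjl⟩

theorem existsUnique_staircase (S : Fin r → Fin s → Prop) (hne : ∃ k l, S k l)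
    (hS : ∀ {k k' l l'}, S k l → k' ≤ k → l ≤ l' → S k' l')
    (hdiag : ∀ {k l}, S k l → (k : ℕ) ≤ l) :
    ∃! p : (i : ℕ) × (Fin i → Fin s), 1 ≤ p.1 ∧ p.1 ≤ min r s ∧ Monotone p.2 ∧
      (∀ k : Fin p.1, (k : ℕ) ≤ (p.2 k : ℕ)) ∧ ∀ k l, S k l ↔ ¬ outsideStaircase p.1 p.2 k l := by
  obtain ⟨i, j, hij⟩ := exists_staircase S hne hS hdiag
  refine ⟨⟨i, j⟩, hij, fun ⟨i', j'⟩ hij' => eq_of_outsideStaircase_iff (le_min_iff.1 hij'.2.1).1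
    (le_min_iff.1 hij.2.1).1 fun k l => ?_⟩
  exact not_iff_not.1 ((hij'.2.2.2.2 k l).symm.trans (hij.2.2.2.2 k l))

end Staircase

/-- Indices are `0`-based: `p.1` is `i` and `p.2 k` is `j_{k+1} - 1`. -/
theorem subbimodule_nest_classification
    (D : Type*) [DivisionRing D] (r s : ℕ) (M : Fin r → ℕ) (N : Fin s → ℕ)
    (hM : ∀ i, 0 < M i) (hN : ∀ j, 0 < N j)
    (J : AddSubgroup (Matrix (Fin (∑ t, M t)) (Fin (∑ t, N t)) D))
    (hJne : J ≠ ⊥)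
    (hJT : ∀ A ∈ J, IsNest M N A)
    (hJl : ∀ (P : Matrix (Fin (∑ t, M t)) (Fin (∑ t, M t)) D)
      (A : Matrix (Fin (∑ t, M t)) (Fin (∑ t, N t)) D),
      IsNest M M P → A ∈ J → P * A ∈ J)
    (hJr : ∀ (A : Matrix (Fin (∑ t, M t)) (Fin (∑ t, N t)) D)
      (Q : Matrix (Fin (∑ t, N t)) (Fin (∑ t, N t)) D),
      IsNest N N Q → A ∈ J → A * Q ∈ J) :
    (∃! p : (i : ℕ) × (Fin i → Fin s),
      1 ≤ p.1 ∧ p.1 ≤ min r s ∧ Monotone p.2 ∧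
      (∀ k : Fin p.1, (k : ℕ) ≤ (p.2 k : ℕ)) ∧
      (J : Set (Matrix (Fin (∑ t, M t)) (Fin (∑ t, N t)) D)) =
        {A | ∀ (k : Fin r) (l : Fin s) (a : Fin (M k)) (b : Fin (N l)),
          (p.1 ≤ (k : ℕ) ∨ ∃ hk : (k : ℕ) < p.1, (l : ℕ) < (p.2 ⟨(k : ℕ), hk⟩ : ℕ)) →
          A (blockIdx M k a) (blockIdx N l b) = 0}) ∧
    (∃ A ∈ J, ∀ K : AddSubgroup (Matrix (Fin (∑ t, M t)) (Fin (∑ t, N t)) D),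
      (∀ B ∈ K, IsNest M N B) →
      (∀ (P : Matrix (Fin (∑ t, M t)) (Fin (∑ t, M t)) D)
        (B : Matrix (Fin (∑ t, M t)) (Fin (∑ t, N t)) D),
        IsNest M M P → B ∈ K → P * B ∈ K) →
      (∀ (B : Matrix (Fin (∑ t, M t)) (Fin (∑ t, N t)) D)
        (Q : Matrix (Fin (∑ t, N t)) (Fin (∑ t, N t)) D),
        IsNest N N Q → B ∈ K → B * Q ∈ K) →
      A ∈ K → J ≤ K) := by
  have hJ : IsNestSubbimodule M N J := ⟨hJT, hJl, hJr⟩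
  have hshape := existsUnique_staircase (blockSupport M N J)
    (exists_blockSupport_of_ne_bot M N hJne)
    (fun hkl hk hl => hJ.blockSupport_of_le hkl hk hl ⟨0, hM _⟩ ⟨0, hN _⟩) hJ.blockSupport_le
  obtain ⟨A, hAJ, hA⟩ := hJ.exists_generator
  refine ⟨(existsUnique_congr fun p => ?_).1 hshape, A, hAJ,
    fun K hKT hKl hKr => hA K ⟨hKT, hKl, hKr⟩⟩
  exact and_congr_right' <| and_congr_right' <| and_congr_right' <| and_congr_right'
    (hJ.coe_eq_blockZeroLocus_iff hM hN).symm
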